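/- Let h : ℝ → ℝ be continuously differentiable on [0, 1] with h(0) = 0 and h(1) = 0. Then ∫_0^1 ((h′(x))² − (h(x))²) dx ≥ 0. -/

import Mathlib

/-!
The cotangent solves the Riccati equation `g' = -(1 + g²)`, and for any such `g` one has the
pointwise identity `h'² - h² = (h' - g h)² + (g h²)'`. On `[0, 1]` we take `g x = cot (x + 1)`,
which is smooth there because `[1, 2] ⊂ (0, π)`. Integrating the identity, the boundary term
`g h²` vanishes with `h`, and what remains is the integral of a square.
-/

open Set intervalIntegral

theorem Real.hasDerivAt_cot {x : ℝ} (hx : Real.sin x ≠ 0) :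
    HasDerivAt Real.cot (-(1 + Real.cot x ^ 2)) x := by
  rw [show Real.cot = Real.cos / Real.sin from funext Real.cot_eq_cos_div_sin, Pi.div_apply]
  refine ((Real.hasDerivAt_cos x).div (Real.hasDerivAt_sin x) hx).congr_deriv ?_
  field_simp
  ring

theorem integral_sq_deriv_sub_sq_nonneg_of_riccati {a b : ℝ} (hab : a ≤ b)
    {h h' g : ℝ → ℝ} (hh : ContinuousOn h (Icc a b)) (hh' : ContinuousOn h' (Icc a b))
    (hg : ContinuousOn g (Icc a b))
    (hh_deriv : ∀ x ∈ Ioo a b, HasDerivAt h (h' x) x)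
    (hg_deriv : ∀ x ∈ Ioo a b, HasDerivAt g (-(1 + g x ^ 2)) x)
    (ha : h a = 0) (hb : h b = 0) :
    0 ≤ ∫ x in a..b, (h' x ^ 2 - h x ^ 2) := by
  set gh2' : ℝ → ℝ := fun x => -(1 + g x ^ 2) * h x ^ 2 + g x * (2 * h x * h' x)
  have hint_gh2' : IntervalIntegrable gh2' MeasureTheory.volume a b :=
    ContinuousOn.intervalIntegrable_of_Icc hab <|
      ((continuousOn_const.add (hg.pow 2)).neg.mul (hh.pow 2)).add
        (hg.mul ((continuousOn_const.mul hh).mul hh'))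
  have hint_sq : IntervalIntegrable (fun x => (h' x - g x * h x) ^ 2) MeasureTheory.volume a b :=
    ContinuousOn.intervalIntegrable_of_Icc hab ((hh'.sub (hg.mul hh)).pow 2)
  have hintegral_gh2' : ∫ x in a..b, gh2' x = 0 := by
    have hderiv : ∀ x ∈ Ioo a b, HasDerivAt (fun x => g x * h x ^ 2) (gh2' x) x :=
      fun x hx => ((hg_deriv x hx).mul ((hh_deriv x hx).fun_pow 2)).congr_deriv (by
        simp only [gh2']; ring)
    rw [integral_eq_sub_of_hasDerivAt_of_le hab (hg.mul (hh.pow 2)) hderiv hint_gh2']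
    simp only [Pi.mul_apply, Pi.pow_apply, ha, hb]
    ring
  calc ∫ x in a..b, (h' x ^ 2 - h x ^ 2)
      = (∫ x in a..b, (h' x - g x * h x) ^ 2) + ∫ x in a..b, gh2' x := by
        rw [← integral_add hint_sq hint_gh2']
        exact integral_congr fun x _ => by ring
    _ = ∫ x in a..b, (h' x - g x * h x) ^ 2 := by rw [hintegral_gh2', add_zero]
    _ ≥ 0 := integral_nonneg hab fun x _ => sq_nonneg _

theorem ContDiffOn.hasDerivAt_derivWithin_Icc {h : ℝ → ℝ} {a b x : ℝ}
    (hh : ContDiffOn ℝ 1 h (Icc a b)) (hx : x ∈ Ioo a b) :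
    HasDerivAt h (derivWithin h (Icc a b) x) x := by
  have hnhds : Icc a b ∈ nhds x := Icc_mem_nhds hx.1 hx.2
  rw [derivWithin_of_mem_nhds hnhds]
  exact ((hh.differentiableOn one_ne_zero x (Ioo_subset_Icc_self hx)).differentiableAt
    hnhds).hasDerivAt

/-- Poincaré-type inequality on `[0, 1]`: for C¹ functions vanishing at the
endpoints, `∫_0^1 (h′² - h²) dx ≥ 0`. -/
theorem poincare_type_inequality
    (h : ℝ → ℝ) (hh : ContDiffOn ℝ 1 h (Set.Icc 0 1))
    (h0 : h 0 = 0) (h1 : h 1 = 0) :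
    ∫ x in (0 : ℝ)..1, ((deriv h x) ^ 2 - (h x) ^ 2) ≥ 0 := by
  have hcot_deriv : ∀ x ∈ Icc (0 : ℝ) 1,
      HasDerivAt (fun y => Real.cot (y + 1)) (-(1 + Real.cot (x + 1) ^ 2)) x := by
    intro x hx
    refine HasDerivAt.comp_add_const x 1
      (Real.hasDerivAt_cot (Real.sin_pos_of_pos_of_lt_pi ?_ ?_).ne')
    · linarith [hx.1]
    · linarith [hx.2, Real.pi_gt_three]
  have hderiv := fun x (hx : x ∈ Ioo (0 : ℝ) 1) => hh.hasDerivAt_derivWithin_Icc hx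
  refine (integral_sq_deriv_sub_sq_nonneg_of_riccati zero_le_one hh.continuousOn
    (hh.continuousOn_derivWithin (uniqueDiffOn_Icc one_pos) le_rfl)
    (fun x hx => (hcot_deriv x hx).continuousAt.continuousWithinAt) hderiv
    (fun x hx => hcot_deriv x (Ioo_subset_Icc_self hx)) h0 h1).trans_eq
    (integral_congr_Ioo_of_le zero_le_one fun x hx => ?_)
  simp only [(hderiv x hx).deriv]
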